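/- Fixation probability via the stationary CASP: let A_eq have the stationary distribution of the Cannings ancestral selection process (A_m)_{m≥0}. Then the fixation probability of a single beneficial mutant satisfies π_N := lim_{g→∞} P(K_g = 0 | K_0 = N−1) = E[A_eq / N]; in particular this limit exists. -/

import Mathlib

open MeasureTheory Filter Finset Topology

noncomputable section

/-- The paintbox condition: `μ` is the law of an exchangeable random vector of
probability weights `(W_1, …, W_N)` (indexed by `0, …, N-1`, padded by zeros). -/
def IsWeights (N : ℕ) (μ : Measure (ℕ → ℝ)) : Prop :=
  IsProbabilityMeasure μ ∧
  (∀ᵐ w ∂μ, (∀ i, 0 ≤ w i) ∧ (∀ i, N ≤ i → w i = 0) ∧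
    ∑ i ∈ Finset.range N, w i = 1) ∧
  (∀ σ : Equiv.Perm ℕ, (∀ i, N ≤ i → σ i = i) →
    Measure.map (fun w => w ∘ σ) μ = μ)

/-- The (conditional on the weights) success probability `P(k, 𝒲)` for the mixed
binomial transition of the Cannings frequency process. -/
def selProb (N : ℕ) (s : ℝ) (k : ℕ) (w : ℕ → ℝ) : ℝ :=
  ((1 - s) * ∑ i ∈ Finset.range k, w i) /
    ((1 - s) * ∑ i ∈ Finset.range k, w i + ∑ i ∈ Finset.Ico k N, w i)

/-- One-step transition probability of the Cannings frequency process with selection: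
given `K_{g-1} = k`, `K_g` is mixed binomial with parameters `N` and `P(k,𝒲)`. -/
def canningsStep (N : ℕ) (s : ℝ) (μ : Measure (ℕ → ℝ)) (k j : ℕ) : ℝ :=
  ∫ w, (N.choose j : ℝ) * selProb N s k w ^ j * (1 - selProb N s k w) ^ (N - j) ∂μ

/-- `canningsProb N s μ g k j = P(K_g = j | K_0 = k)`. -/
def canningsProb (N : ℕ) (s : ℝ) (μ : Measure (ℕ → ℝ)) : ℕ → ℕ → ℕ → ℝ
  | 0, k, j => if j = k then 1 else 0
  | g + 1, k, j => ∑ i ∈ Finset.range (N + 1),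
      canningsProb N s μ g k i * canningsStep N s μ i j

/-- Law of the sum of `a` independent Geometric(1-s) random variables (trials up to
and including the first success): `negbinom s a h = P(G^{(1)} + ⋯ + G^{(a)} = h)`. -/
def negbinom (s : ℝ) (a h : ℕ) : ℝ :=
  if a ≤ h then ((h - 1).choose (a - 1) : ℝ) * (1 - s) ^ a * s ^ (h - a) else 0

/-- Probability (given the weights `w`) that exactly `j` boxes are occupied when
`h` balls are placed independently into `N` boxes, ball into box `i` w.p. `w i`
(inclusion–exclusion formula). -/
def occupancy (N : ℕ) (w : ℕ → ℝ) (h j : ℕ) : ℝ :=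
  ∑ S ∈ (Finset.range N).powersetCard j, ∑ T ∈ S.powerset,
    (-1 : ℝ) ^ (j - T.card) * (∑ i ∈ T, w i) ^ h

/-- One-step transition probability of the Cannings ancestral selection process
(CASP): branching (negative binomial) followed by coalescence (balls in boxes). -/
def caspStep (N : ℕ) (s : ℝ) (μ : Measure (ℕ → ℝ)) (a j : ℕ) : ℝ :=
  ∑' h : ℕ, negbinom s a h * ∫ w, occupancy N w h j ∂μ

/-- `caspProb N s μ m a j = P(A_m = j | A_0 = a)`. -/
def caspProb (N : ℕ) (s : ℝ) (μ : Measure (ℕ → ℝ)) : ℕ → ℕ → ℕ → ℝ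
  | 0, a, j => if j = a then 1 else 0
  | m + 1, a, j => ∑ i ∈ Finset.range (N + 1),
      caspProb N s μ m a i * caspStep N s μ i j

/-- The exponent `b_N = - ln s_N / ln N`, so that `s_N = N^{-b_N}`. -/
def bexp (s : ℕ → ℝ) (N : ℕ) : ℝ := - Real.log (s N) / Real.log N

/-- `A` is (a realization on `(Ω, P)` of) the Cannings ancestral selection process
with parameters `N`, `ℒ(𝒲) = μ`, `s`, started at `a0`: its finite-dimensional
distributions are the Markovian ones with one-step transitions `caspStep`. -/
def IsCASPProcess (N : ℕ) (s : ℝ) (μ : Measure (ℕ → ℝ)) {Ω : Type}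
    [MeasurableSpace Ω] (P : Measure Ω) (A : ℕ → Ω → ℕ) (a0 : ℕ) : Prop :=
  IsProbabilityMeasure P ∧
  ∀ (m : ℕ) (a : ℕ → ℕ),
    (P {ω | ∀ i ≤ m, A i ω = a i}).toReal =
      (if a 0 = a0 then 1 else 0) *
        ∏ i ∈ Finset.range m, caspStep N s μ (a i) (a (i + 1))

/-- Upward jump rate of the Moran ancestral selection process. -/
def maspUp (N : ℕ) (s : ℝ) (k : ℕ) : ℝ := k * s * ((N : ℝ) - k) / N

/-- Downward jump rate of the Moran ancestral selection process. -/
def maspDown (N : ℕ) (ρ2 : ℝ) (k : ℕ) : ℝ := ρ2 / N * (k.choose 2 : ℝ)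

/-- Total jump rate of the MASP. -/
def maspRate (N : ℕ) (ρ2 s : ℝ) (k : ℕ) : ℝ := maspUp N s k + maspDown N ρ2 k

/-- Transition matrix of the embedded jump chain of the MASP. -/
def maspJump (N : ℕ) (ρ2 s : ℝ) (k j : ℕ) : ℝ :=
  if j = k + 1 then maspUp N s k / maspRate N ρ2 s k
  else if j + 1 = k then maspDown N ρ2 k / maspRate N ρ2 s k
  else 0

/-- `(J, E)` is the jump-hold description of the Moran ancestral selection process
with parameters `N`, `ρ2`, `s`, started at `n0`: `J` is the embedded jump chain,
and conditionally on it the holding times `E i` are independent exponentials with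
the state-dependent total rates. -/
def IsMASP (N : ℕ) (ρ2 s : ℝ) {Ω : Type} [MeasurableSpace Ω] (P : Measure Ω)
    (J : ℕ → Ω → ℕ) (E : ℕ → Ω → ℝ) (n0 : ℕ) : Prop :=
  IsProbabilityMeasure P ∧
  ∀ (m : ℕ) (a : ℕ → ℕ) (t : ℕ → ℝ), (∀ i, 0 ≤ t i) →
    (P {ω | (∀ i ≤ m, J i ω = a i) ∧ (∀ i ≤ m, t i ≤ E i ω)}).toReal =
      (if a 0 = n0 then 1 else 0)
        * (∏ i ∈ Finset.range m, maspJump N ρ2 s (a i) (a (i + 1)))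
        * ∏ i ∈ Finset.range (m + 1), Real.exp (-(maspRate N ρ2 s (a i)) * t i)

/-- The value `B_r` of the MASP at time `r`, read off from the jump-hold data. -/
def maspVal {Ω : Type} (J : ℕ → Ω → ℕ) (E : ℕ → Ω → ℝ) (r : ℝ) (ω : Ω) : ℕ :=
  J (sSup {i : ℕ | ∑ l ∈ Finset.range i, E l ω ≤ r}) ω

/-!
`H(k, a) = C(k, a) / C(N, a)` is a sampling duality function between the Cannings frequency
process and the CASP: for `1 ≤ a ≤ N`, both `E_k[H(K_1, a)]` and `E_a[H(k, A_1)]` equal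
`E[P(k, 𝒲)^a]`. On the Cannings side this is a factorial moment of the binomial law. On the CASP
side, exchangeability makes `E_a[H(k, A_1)]` the probability that all `G^{(1)} + ⋯ + G^{(a)}`
balls land in the first `k` boxes, and `P(k, 𝒲)` is the generating function of a
Geometric(1 - s) variable evaluated at `W_1 + ⋯ + W_k`. Hence `f(k) = E[H(k, A_eq)]` is harmonic
for the Cannings chain, with `f(0) = 0` and `f(N) = 1`. Since every generation ends in `{0, N}`
with probability at least `2^{-N}`, the chain is absorbed there geometrically fast, so
`P_k(K_g = 0) → 1 - f(k)`, and `1 - f(N - 1) = E[A_eq / N]`.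
-/

def iterKernel (N : ℕ) (p : ℕ → ℕ → ℝ) : ℕ → ℕ → ℕ → ℝ
  | 0, k, j => if j = k then 1 else 0
  | g + 1, k, j => ∑ i ∈ range (N + 1), iterKernel N p g k i * p i j

theorem sum_range_succ_eq_add_add_sum_Ico {M : Type*} [AddCommMonoid M] {N : ℕ} (hN : 0 < N)
    (F : ℕ → M) : ∑ j ∈ range (N + 1), F j = F 0 + F N + ∑ j ∈ Ico 1 N, F j := by
  rw [sum_range_succ, sum_range_eq_add_Ico _ hN, add_right_comm]

namespace iterKernel

variable {N : ℕ} {p : ℕ → ℕ → ℝ}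

theorem nonneg (hp : ∀ i ≤ N, ∀ j, 0 ≤ p i j) (g k j : ℕ) : 0 ≤ iterKernel N p g k j := by
  induction g generalizing j with
  | zero => unfold iterKernel; positivity
  | succ g ih =>
    exact sum_nonneg fun i hi => mul_nonneg (ih i) (hp i (mem_range_succ_iff.mp hi) j)

theorem sum_mul_of_harmonic {f : ℕ → ℝ} (hf : ∀ i ≤ N, ∑ j ∈ range (N + 1), p i j * f j = f i)
    (g : ℕ) {k : ℕ} (hk : k ≤ N) :
    ∑ j ∈ range (N + 1), iterKernel N p g k j * f j = f k := by
  induction g with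
  | zero => simp [iterKernel, hk]
  | succ g ih =>
    calc ∑ j ∈ range (N + 1), iterKernel N p (g + 1) k j * f j
        = ∑ i ∈ range (N + 1), iterKernel N p g k i * ∑ j ∈ range (N + 1), p i j * f j := by
          simp only [iterKernel, sum_mul, mul_sum, mul_assoc]
          exact sum_comm
      _ = f k := by
          rw [← ih]
          exact sum_congr rfl fun i hi => by rw [hf i (mem_range_succ_iff.mp hi)]

theorem sum_eq_one (hrow : ∀ i ≤ N, ∑ j ∈ range (N + 1), p i j = 1) (g : ℕ) {k : ℕ}
    (hk : k ≤ N) : ∑ j ∈ range (N + 1), iterKernel N p g k j = 1 := by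
  simpa using sum_mul_of_harmonic (f := fun _ => 1) (by simpa using hrow) g hk

theorem sum_Ico_le_pow (hp : ∀ i ≤ N, ∀ j, 0 ≤ p i j)
    (habs : ∀ j ∈ Ico 1 N, p 0 j = 0 ∧ p N j = 0) {r : ℝ} (hr : 0 ≤ r)
    (hstay : ∀ i ∈ Ico 1 N, ∑ j ∈ Ico 1 N, p i j ≤ r) (g k : ℕ) :
    ∑ j ∈ Ico 1 N, iterKernel N p g k j ≤ r ^ g := by
  induction g with
  | zero =>
    simp only [iterKernel, sum_ite_eq', pow_zero]
    split_ifs <;> norm_num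
  | succ g ih =>
    have hstep : ∀ i ∈ range (N + 1), ∑ j ∈ Ico 1 N, iterKernel N p g k i * p i j
        ≤ if i ∈ Ico 1 N then iterKernel N p g k i * r else 0 := by
      intro i hi
      rw [← mul_sum]
      split_ifs with hint
      · exact mul_le_mul_of_nonneg_left (hstay i hint) (nonneg hp g k i)
      · have hi0N : i = 0 ∨ i = N := by simp only [mem_Ico, mem_range] at hint hi; omega
        rcases hi0N with rfl | rfl <;>
          simp [sum_eq_zero fun j hj => (habs j hj).1, sum_eq_zero fun j hj => (habs j hj).2]
    calc ∑ j ∈ Ico 1 N, iterKernel N p (g + 1) k j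
        = ∑ i ∈ range (N + 1), ∑ j ∈ Ico 1 N, iterKernel N p g k i * p i j := by
          simp only [iterKernel]; exact sum_comm
      _ ≤ ∑ i ∈ range (N + 1), if i ∈ Ico 1 N then iterKernel N p g k i * r else 0 :=
          sum_le_sum hstep
      _ = (∑ i ∈ Ico 1 N, iterKernel N p g k i) * r := by
          rw [sum_ite_mem, sum_mul, inter_eq_right.mpr]
          intro i hi; simp only [mem_Ico, mem_range] at hi ⊢; omega
      _ ≤ r ^ (g + 1) := by rw [pow_succ]; exact mul_le_mul_of_nonneg_right ih hr

theorem tendsto_of_harmonic (hp : ∀ i ≤ N, ∀ j, 0 ≤ p i j)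
    (hrow : ∀ i ≤ N, ∑ j ∈ range (N + 1), p i j = 1)
    (habs : ∀ j ∈ Ico 1 N, p 0 j = 0 ∧ p N j = 0) {r : ℝ} (hr0 : 0 ≤ r) (hr1 : r < 1)
    (hstay : ∀ i ∈ Ico 1 N, ∑ j ∈ Ico 1 N, p i j ≤ r)
    {f : ℕ → ℝ} (hf : ∀ i ≤ N, ∑ j ∈ range (N + 1), p i j * f j = f i)
    (hf0 : f 0 = 0) (hfN : f N = 1) (hf_mem : ∀ j ∈ Ico 1 N, f j ∈ Set.Icc 0 1)
    {k : ℕ} (hk : k ≤ N) :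
    Tendsto (fun g => iterKernel N p g k 0) atTop (𝓝 (1 - f k)) := by
  have hN : 0 < N := Nat.pos_of_ne_zero (by rintro rfl; simp [hf0] at hfN)
  have hbound : ∀ g, |iterKernel N p g k 0 - (1 - f k)| ≤ r ^ g := by
    intro g
    have hmass := sum_eq_one hrow g hk
    have hf_iter := sum_mul_of_harmonic hf g hk
    rw [sum_range_succ_eq_add_add_sum_Ico hN] at hmass hf_iter
    rw [hf0, hfN, mul_zero, mul_one, zero_add] at hf_iter
    have hlow : 0 ≤ ∑ j ∈ Ico 1 N, iterKernel N p g k j * f j :=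
      sum_nonneg fun j hj => mul_nonneg (nonneg hp g k j) (hf_mem j hj).1
    have hup : ∑ j ∈ Ico 1 N, iterKernel N p g k j * f j ≤ ∑ j ∈ Ico 1 N, iterKernel N p g k j :=
      sum_le_sum fun j hj => mul_le_of_le_one_right (nonneg hp g k j) (hf_mem j hj).2
    have hdecay := sum_Ico_le_pow hp habs hr0 hstay g k
    rw [abs_le]; constructor <;> linarith
  rw [tendsto_iff_norm_sub_tendsto_zero]
  exact squeeze_zero (fun g => norm_nonneg _) hbound (tendsto_pow_atTop_nhds_zero_of_lt_one hr0 hr1)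

end iterKernel

theorem sum_mul_dual_eq_of_stationary {N k : ℕ} {p q H : ℕ → ℕ → ℝ} {ν : ℕ → ℝ}
    (hdual : ∀ a ∈ Icc 1 N,
      ∑ j ∈ range (N + 1), p k j * H j a = ∑ j ∈ range (N + 1), q a j * H k j)
    (hν0 : ν 0 = 0) (hstat : ∀ j ≤ N, ν j = ∑ i ∈ range (N + 1), ν i * q i j) :
    ∑ j ∈ range (N + 1), p k j * ∑ a ∈ range (N + 1), ν a * H j a
      = ∑ a ∈ range (N + 1), ν a * H k a := by
  calc ∑ j ∈ range (N + 1), p k j * ∑ a ∈ range (N + 1), ν a * H j a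
      = ∑ a ∈ range (N + 1), ν a * ∑ j ∈ range (N + 1), p k j * H j a := by
        simp only [mul_sum]; rw [sum_comm]; exact sum_congr rfl fun _ _ => sum_congr rfl
          fun _ _ => by ring
    _ = ∑ a ∈ range (N + 1), ν a * ∑ i ∈ range (N + 1), q a i * H k i := by
        refine sum_congr rfl fun a ha => ?_
        rcases Nat.eq_zero_or_pos a with rfl | ha0
        · simp [hν0]
        · rw [hdual a (mem_Icc.mpr ⟨ha0, mem_range_succ_iff.mp ha⟩)]
    _ = ∑ i ∈ range (N + 1), (∑ a ∈ range (N + 1), ν a * q a i) * H k i := by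
        simp only [mul_sum, sum_mul]; rw [sum_comm]; exact sum_congr rfl fun _ _ => sum_congr rfl
          fun _ _ => by ring
    _ = ∑ a ∈ range (N + 1), ν a * H k a :=
        sum_congr rfl fun i hi => by rw [← hstat i (mem_range_succ_iff.mp hi)]

theorem sum_choose_mul_choose_mul {N n a : ℕ} (ha : a ≤ n) (hn : n ≤ N) (f : ℕ → ℝ) :
    ∑ j ∈ range (N + 1), (n.choose j : ℝ) * j.choose a * f j
      = n.choose a * ∑ i ∈ range (n - a + 1), ((n - a).choose i : ℝ) * f (a + i) := by
  obtain ⟨d, rfl⟩ := Nat.exists_eq_add_of_le ha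
  rw [← sum_subset (range_subset_range.mpr (by omega : a + d + 1 ≤ N + 1)) fun j _ hj => by
      rw [Nat.choose_eq_zero_of_lt (by simpa using hj)]; simp,
    show a + d + 1 = a + (d + 1) by ring, sum_range_add, add_tsub_cancel_left,
    sum_eq_zero fun j hj => by rw [Nat.choose_eq_zero_of_lt (n := j) (mem_range.mp hj)]; simp,
    zero_add, mul_sum]
  refine sum_congr rfl fun i _ => ?_
  have h := Nat.choose_mul (n := a + d) (k := a + i) (s := a) (by omega)
  rw [add_tsub_cancel_left, add_tsub_cancel_left] at h
  rw [← mul_assoc, ← Nat.cast_mul, ← Nat.cast_mul, h]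

theorem sum_choose_mul_choose_mul_neg_one_pow {N k : ℕ} (hk : k ≤ N) (m : ℕ) :
    ∑ j ∈ range (N + 1), (k.choose j : ℝ) * j.choose m * (-1) ^ (j - m)
      = if m = k then 1 else 0 := by
  rcases le_or_gt m k with hmk | hkm
  · have h := congrArg (Int.cast : ℤ → ℝ) (Int.alternating_sum_range_choose (n := k - m))
    push_cast at h
    rw [sum_choose_mul_choose_mul hmk hk]
    simp only [add_tsub_cancel_left]
    rw [sum_congr rfl fun i _ => mul_comm _ _, h]
    rcases eq_or_ne m k with rfl | hne
    · simp
    · rw [if_neg (by omega), if_neg hne, mul_zero]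
  · rw [if_neg hkm.ne']
    refine sum_eq_zero fun j _ => ?_
    rcases le_or_gt j k with hjk | hkj
    · rw [Nat.choose_eq_zero_of_lt (hjk.trans_lt hkm)]; simp
    · rw [Nat.choose_eq_zero_of_lt hkj]; simp

def binomPmf (N : ℕ) (p : ℝ) (j : ℕ) : ℝ := (N.choose j : ℝ) * p ^ j * (1 - p) ^ (N - j)

theorem continuous_binomPmf (N j : ℕ) : Continuous fun p => binomPmf N p j := by
  unfold binomPmf; fun_prop

theorem sum_binomPmf (N : ℕ) (p : ℝ) : ∑ j ∈ range (N + 1), binomPmf N p j = 1 := by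
  have h := (add_pow p (1 - p) N).symm
  rw [add_sub_cancel, one_pow] at h
  exact (sum_congr rfl fun j _ => by rw [binomPmf]; ring).trans h

-- `H(k, a)`: the chance that `a` of `N` individuals, sampled without replacement, all lie in a
-- fixed set of `k` of them.
def chooseRatio (N k a : ℕ) : ℝ := (k.choose a : ℝ) / N.choose a

namespace chooseRatio

theorem nonneg (N k a : ℕ) : 0 ≤ chooseRatio N k a := by unfold chooseRatio; positivity

theorem le_one {N k : ℕ} (hk : k ≤ N) (a : ℕ) : chooseRatio N k a ≤ 1 :=
  div_le_one_of_le₀ (by exact_mod_cast Nat.choose_le_choose a hk) (Nat.cast_nonneg _)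

theorem self {N a : ℕ} (ha : a ≤ N) : chooseRatio N N a = 1 :=
  div_self (by exact_mod_cast (Nat.choose_pos ha).ne')

theorem zero_left (N : ℕ) {a : ℕ} (ha : 0 < a) : chooseRatio N 0 a = 0 := by
  simp [chooseRatio, Nat.choose_eq_zero_of_lt ha]

theorem pred_left {N a : ℕ} (hN : 1 ≤ N) (ha : a ≤ N) :
    chooseRatio N (N - 1) a = 1 - (a : ℝ) / N := by
  obtain ⟨n, rfl⟩ := Nat.exists_eq_add_of_le' hN
  rw [add_tsub_cancel_right]
  have hpos : (0 : ℝ) < ((n + 1).choose a : ℝ) := by exact_mod_cast Nat.choose_pos ha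
  have key : (n.choose a : ℝ) * (n + 1) = ((n + 1).choose a : ℝ) * (n + 1 - a) := by
    have h := congrArg (Nat.cast : ℕ → ℝ) (Nat.choose_mul_succ_eq n a)
    push_cast [Nat.cast_sub ha] at h
    exact h
  unfold chooseRatio
  field_simp
  push_cast
  linarith [key]

end chooseRatio

theorem sum_binomPmf_mul_chooseRatio {N a : ℕ} (ha : a ≤ N) (p : ℝ) :
    ∑ j ∈ range (N + 1), binomPmf N p j * chooseRatio N j a = p ^ a := by
  have hpos : (N.choose a : ℝ) ≠ 0 := by exact_mod_cast (Nat.choose_pos ha).ne'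
  calc ∑ j ∈ range (N + 1), binomPmf N p j * chooseRatio N j a
      = (∑ j ∈ range (N + 1), (N.choose j : ℝ) * j.choose a * (p ^ j * (1 - p) ^ (N - j)))
          / N.choose a := by
        rw [sum_div]; exact sum_congr rfl fun j _ => by rw [binomPmf, chooseRatio]; ring
    _ = p ^ a * ∑ i ∈ range (N - a + 1), binomPmf (N - a) p i := by
        rw [sum_choose_mul_choose_mul ha le_rfl, mul_div_cancel_left₀ _ hpos, mul_sum]
        refine sum_congr rfl fun i _ => ?_
        rw [binomPmf, pow_add, show N - (a + i) = N - a - i by omega]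
        ring
    _ = p ^ a := by rw [sum_binomPmf, mul_one]

section Mixture

variable {N : ℕ} {ν : ℕ → ℝ}

theorem sum_mul_chooseRatio_zero_left (hν0 : ν 0 = 0) :
    ∑ a ∈ range (N + 1), ν a * chooseRatio N 0 a = 0 :=
  sum_eq_zero fun a _ => by
    rcases Nat.eq_zero_or_pos a with rfl | ha
    · rw [hν0, zero_mul]
    · rw [chooseRatio.zero_left N ha, mul_zero]

theorem sum_mul_chooseRatio_self (hνsum : ∑ a ∈ range (N + 1), ν a = 1) :
    ∑ a ∈ range (N + 1), ν a * chooseRatio N N a = 1 := by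
  rw [← hνsum]
  exact sum_congr rfl fun a ha => by rw [chooseRatio.self (mem_range_succ_iff.mp ha), mul_one]

theorem sum_mul_chooseRatio_mem_Icc (hν : ∀ a, 0 ≤ ν a) (hνsum : ∑ a ∈ range (N + 1), ν a = 1)
    {k : ℕ} (hk : k ≤ N) : ∑ a ∈ range (N + 1), ν a * chooseRatio N k a ∈ Set.Icc 0 1 :=
  ⟨sum_nonneg fun a _ => mul_nonneg (hν a) (chooseRatio.nonneg N k a),
    hνsum ▸ sum_le_sum fun a _ => mul_le_of_le_one_right (hν a) (chooseRatio.le_one hk a)⟩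

theorem sum_mul_chooseRatio_pred_left (hN : 1 ≤ N) (hνsum : ∑ a ∈ range (N + 1), ν a = 1) :
    ∑ a ∈ range (N + 1), ν a * chooseRatio N (N - 1) a
      = 1 - ∑ a ∈ range (N + 1), ν a * ((a : ℝ) / N) := by
  rw [← hνsum, ← sum_sub_distrib]
  exact sum_congr rfl fun a ha => by
    rw [chooseRatio.pred_left hN (mem_range_succ_iff.mp ha)]; ring

end Mixture

def IsWeightVector (N : ℕ) (w : ℕ → ℝ) : Prop :=
  (∀ i, 0 ≤ w i) ∧ (∀ i, N ≤ i → w i = 0) ∧ ∑ i ∈ range N, w i = 1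

theorem IsWeights.ae_isWeightVector {N : ℕ} {μ : Measure (ℕ → ℝ)} (hw : IsWeights N μ) :
    ∀ᵐ w ∂μ, IsWeightVector N w :=
  hw.2.1

def geomPgf (s x : ℝ) : ℝ := (1 - s) * x / (1 - s * x)

section geomPgf

variable {s x : ℝ}

theorem geomPgf_mem_Icc (hs : s < 1) (hx0 : 0 ≤ x) (hx1 : x ≤ 1) : geomPgf s x ∈ Set.Icc 0 1 := by
  have hden : 0 < 1 - s * x := by rcases le_total 0 s with h | h <;> nlinarith
  refine ⟨div_nonneg (by nlinarith) hden.le, (div_le_one hden).mpr (by nlinarith)⟩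

theorem geomPgf_one (hs : s ≠ 1) : geomPgf s 1 = 1 := by
  simp [geomPgf, sub_ne_zero.mpr hs.symm]

theorem hasSum_negbinom_mul_pow {a : ℕ} (ha : 1 ≤ a) (hsx : ‖s * x‖ < 1) :
    HasSum (fun h => negbinom s a h * x ^ h) (geomPgf s x ^ a) := by
  obtain ⟨b, rfl⟩ := Nat.exists_eq_add_of_le' ha
  have hshift : ∀ d : ℕ, ((1 - s) * x) ^ (b + 1) * (((d + b).choose b : ℝ) * (s * x) ^ d)
      = negbinom s (b + 1) (d + (b + 1)) * x ^ (d + (b + 1)) := by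
    intro d
    rw [negbinom, if_pos (by omega), show d + (b + 1) - 1 = d + b by omega,
      add_tsub_cancel_right, add_tsub_cancel_right, mul_pow, mul_pow]
    ring
  have htail :=
    (hasSum_choose_mul_geometric_of_norm_lt_one b hsx).mul_left (((1 - s) * x) ^ (b + 1))
  simp only [hshift] at htail
  have hhead : ∑ i ∈ range (b + 1), negbinom s (b + 1) i * x ^ i = 0 :=
    sum_eq_zero fun i hi => by
      rw [negbinom, if_neg (by simp only [mem_range] at hi; omega), zero_mul]
  rw [← hasSum_nat_add_iff' (b + 1), hhead, sub_zero, geomPgf, div_pow, ← mul_one_div]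
  exact htail

theorem summable_negbinom (hs0 : 0 ≤ s) (hs1 : s < 1) {a : ℕ} (ha : 1 ≤ a) :
    Summable (negbinom s a) := by
  have hs : ‖s * 1‖ < 1 := by simpa [abs_of_nonneg hs0] using hs1
  simpa using (hasSum_negbinom_mul_pow ha hs).summable

theorem negbinom_nonneg (hs0 : 0 ≤ s) (hs1 : s ≤ 1) (a h : ℕ) : 0 ≤ negbinom s a h := by
  unfold negbinom
  split_ifs
  · exact mul_nonneg (mul_nonneg (Nat.cast_nonneg _) (pow_nonneg (by linarith) _))
      (pow_nonneg hs0 _)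
  · exact le_rfl

end geomPgf

namespace IsWeightVector

variable {N : ℕ} {w : ℕ → ℝ}

theorem sum_nonneg (hw : IsWeightVector N w) (T : Finset ℕ) : 0 ≤ ∑ i ∈ T, w i :=
  Finset.sum_nonneg fun i _ => hw.1 i

theorem sum_le_one (hw : IsWeightVector N w) (T : Finset ℕ) : ∑ i ∈ T, w i ≤ 1 := by
  calc ∑ i ∈ T, w i ≤ ∑ i ∈ T ∪ range N, w i :=
        sum_le_sum_of_subset_of_nonneg subset_union_left fun i _ _ => hw.1 i
    _ = ∑ i ∈ range N, w i :=
        (sum_subset subset_union_right fun i _ hi => hw.2.1 i (by simpa using hi)).symm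
    _ = 1 := hw.2.2

theorem sum_range_add_sum_Ico (hw : IsWeightVector N w) (k : ℕ) :
    ∑ i ∈ range k, w i + ∑ i ∈ Ico k N, w i = 1 := by
  rcases le_total k N with hk | hk
  · rw [Finset.sum_range_add_sum_Ico _ hk, hw.2.2]
  · rw [Ico_eq_empty_of_le hk, sum_empty, add_zero, ← Finset.sum_range_add_sum_Ico _ hk, hw.2.2,
      sum_eq_zero fun i hi => hw.2.1 i (mem_Ico.mp hi).1, add_zero]

theorem selProb_eq (hw : IsWeightVector N w) (s : ℝ) (k : ℕ) :
    selProb N s k w = geomPgf s (∑ i ∈ range k, w i) := by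
  have h := hw.sum_range_add_sum_Ico k
  rw [selProb, geomPgf, show (1 - s) * ∑ i ∈ range k, w i + ∑ i ∈ Ico k N, w i
    = 1 - s * ∑ i ∈ range k, w i by linarith]

theorem selProb_mem_Icc (hw : IsWeightVector N w) {s : ℝ} (hs : s < 1) (k : ℕ) :
    selProb N s k w ∈ Set.Icc 0 1 := by
  rw [hw.selProb_eq]
  exact geomPgf_mem_Icc hs (hw.sum_nonneg _) (hw.sum_le_one _)

end IsWeightVector

theorem measurable_selProb (N : ℕ) (s : ℝ) (k : ℕ) : Measurable (selProb N s k) := by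
  unfold selProb; fun_prop

section Cannings

variable {N : ℕ} {s : ℝ} {μ : Measure (ℕ → ℝ)}

theorem canningsProb_eq_iterKernel :
    canningsProb N s μ = iterKernel N (canningsStep N s μ) := by
  funext g k j
  induction g generalizing j with
  | zero => rfl
  | succ g ih => simp only [canningsProb, iterKernel, ih]

theorem IsWeights.integrable_comp_selProb (hw : IsWeights N μ) (hs : s < 1) {F : ℝ → ℝ}
    (hF : Continuous F) (k : ℕ) : Integrable (fun w => F (selProb N s k w)) μ := by
  have := hw.1
  obtain ⟨C, hC⟩ := isCompact_Icc.exists_bound_of_continuousOn (hF.continuousOn (s := Set.Icc 0 1))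
  refine .of_bound (hF.measurable.comp (measurable_selProb N s k)).aestronglyMeasurable C ?_
  filter_upwards [hw.ae_isWeightVector] with w hwv
  exact hC _ (hwv.selProb_mem_Icc hs k)

theorem canningsStep_eq (k j : ℕ) :
    canningsStep N s μ k j = ∫ w, binomPmf N (selProb N s k w) j ∂μ :=
  rfl

theorem sum_canningsStep_mul (hw : IsWeights N μ) (hs : s < 1) (k : ℕ) (c : ℕ → ℝ) :
    ∑ j ∈ range (N + 1), canningsStep N s μ k j * c j
      = ∫ w, ∑ j ∈ range (N + 1), binomPmf N (selProb N s k w) j * c j ∂μ := by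
  simp only [canningsStep, ← integral_mul_const]
  refine (integral_finsetSum _ fun j _ => ?_).symm
  exact (hw.integrable_comp_selProb hs (continuous_binomPmf N j) k).mul_const _

theorem sum_canningsStep (hw : IsWeights N μ) (hs : s < 1) (k : ℕ) :
    ∑ j ∈ range (N + 1), canningsStep N s μ k j = 1 := by
  have := hw.1
  simpa [sum_binomPmf] using sum_canningsStep_mul hw hs k (fun _ => 1)

theorem sum_canningsStep_mul_chooseRatio (hw : IsWeights N μ) (hs : s < 1) (k : ℕ) {a : ℕ}
    (ha : a ≤ N) :
    ∑ j ∈ range (N + 1), canningsStep N s μ k j * chooseRatio N j a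
      = ∫ w, selProb N s k w ^ a ∂μ := by
  rw [sum_canningsStep_mul hw hs k]
  simp only [sum_binomPmf_mul_chooseRatio ha]

theorem canningsStep_nonneg (hw : IsWeights N μ) (hs : s < 1) (k j : ℕ) :
    0 ≤ canningsStep N s μ k j := by
  refine integral_nonneg_of_ae ?_
  filter_upwards [hw.ae_isWeightVector] with w hwv
  obtain ⟨h0, h1⟩ := hwv.selProb_mem_Icc hs k
  exact mul_nonneg (mul_nonneg (Nat.cast_nonneg _) (pow_nonneg h0 _)) (pow_nonneg (by linarith) _)

theorem canningsStep_zero_left {j : ℕ} (hj : j ≠ 0) : canningsStep N s μ 0 j = 0 := by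
  simp [canningsStep, selProb, hj]

theorem canningsStep_self_left (hw : IsWeights N μ) (hs : s < 1) {j : ℕ} (hj : j < N) :
    canningsStep N s μ N j = 0 := by
  refine integral_eq_zero_of_ae ?_
  filter_upwards [hw.ae_isWeightVector] with w hwv
  rw [hwv.selProb_eq, hwv.2.2, geomPgf_one hs.ne, sub_self, zero_pow (by omega), mul_zero]
  rfl

theorem one_div_two_pow_le_canningsStep (hw : IsWeights N μ) (hs : s < 1) (k : ℕ) :
    1 / 2 ^ N ≤ canningsStep N s μ k 0 + canningsStep N s μ k N := by
  have := hw.1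
  have hint : ∀ j, Integrable (fun w => binomPmf N (selProb N s k w) j) μ := fun j =>
    hw.integrable_comp_selProb hs (continuous_binomPmf N j) k
  rw [canningsStep_eq, canningsStep_eq, ← integral_add (hint 0) (hint N)]
  calc 1 / 2 ^ N = ∫ _, (1 / 2 ^ N : ℝ) ∂μ := by simp
    _ ≤ _ := integral_mono_ae (integrable_const _) ((hint 0).add (hint N)) ?_
  filter_upwards [hw.ae_isWeightVector] with w hwv
  obtain ⟨h0, h1⟩ := hwv.selProb_mem_Icc hs k
  have hconv := add_pow_le h0 (sub_nonneg.mpr h1) N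
  rw [add_sub_cancel, one_pow] at hconv
  have hpow : (2 : ℝ) ^ (N - 1) ≤ 2 ^ N := pow_le_pow_right₀ one_le_two (Nat.sub_le N 1)
  simp only [binomPmf, Nat.choose_zero_right, Nat.choose_self, Nat.cast_one, pow_zero,
    Nat.sub_zero, Nat.sub_self, one_mul, mul_one, Pi.add_apply]
  rw [div_le_iff₀ (by positivity)]
  nlinarith [pow_nonneg h0 N, pow_nonneg (sub_nonneg.mpr h1) N]

theorem sum_Ico_canningsStep_le (hw : IsWeights N μ) (hs : s < 1) (hN : 0 < N) (k : ℕ) :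
    ∑ j ∈ Ico 1 N, canningsStep N s μ k j ≤ 1 - 1 / 2 ^ N := by
  have h := sum_canningsStep hw hs k
  rw [sum_range_succ_eq_add_add_sum_Ico hN] at h
  linarith [one_div_two_pow_le_canningsStep hw hs k, canningsStep_nonneg hw hs k 0,
    canningsStep_nonneg hw hs k N]

end Cannings

theorem exists_perm_image_range_eq {N : ℕ} {T : Finset ℕ} (hT : T ⊆ range N) :
    ∃ σ : Equiv.Perm ℕ, (∀ i, N ≤ i → σ i = i) ∧ (range #T).image σ = T := by
  have hTN : #T ≤ N := by simpa using card_le_card hT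
  have hrange : ((range #T).subtype (· < N)).map (Function.Embedding.subtype _) = range #T := by
    rw [subtype_map, filter_true_of_mem fun i hi => (mem_range.mp hi).trans_le hTN]
  have hT' : (T.subtype (· < N)).map (Function.Embedding.subtype _) = T := by
    rw [subtype_map, filter_true_of_mem fun i hi => mem_range.mp (hT hi)]
  obtain ⟨τ, hτ⟩ := Equiv.Perm.exists_map_finset_eq ((range #T).subtype (· < N))
    (T.subtype (· < N))
    (by rw [← card_map, hrange, ← card_map (Function.Embedding.subtype _), hT', card_range])
  refine ⟨Equiv.Perm.ofSubtype τ,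
    fun i hi => Equiv.Perm.ofSubtype_apply_of_not_mem τ (not_lt.mpr hi), ?_⟩
  conv_lhs => rw [← hrange]
  conv_rhs => rw [← hT', ← hτ]
  simp only [map_eq_image, image_image]
  exact image_congr fun x _ => Equiv.Perm.ofSubtype_apply_coe τ x

def weightMoment (μ : Measure (ℕ → ℝ)) (k h : ℕ) : ℝ := ∫ w, (∑ i ∈ range k, w i) ^ h ∂μ

section Casp

variable {N : ℕ} {s : ℝ} {μ : Measure (ℕ → ℝ)}

theorem IsWeights.integrable_sum_pow (hw : IsWeights N μ) (T : Finset ℕ) (h : ℕ) :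
    Integrable (fun w => (∑ i ∈ T, w i) ^ h) μ := by
  have := hw.1
  refine Integrable.of_bound (by fun_prop) 1 ?_
  filter_upwards [hw.ae_isWeightVector] with w hwv
  rw [norm_pow, Real.norm_of_nonneg (hwv.sum_nonneg T)]
  exact pow_le_one₀ (hwv.sum_nonneg T) (hwv.sum_le_one T)

theorem IsWeights.integral_sum_pow_eq (hw : IsWeights N μ) {T : Finset ℕ} (hT : T ⊆ range N)
    (h : ℕ) : ∫ w, (∑ i ∈ T, w i) ^ h ∂μ = weightMoment μ #T h := by
  obtain ⟨σ, hσN, hσT⟩ := exists_perm_image_range_eq hT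
  have hmeas : Measurable fun w : ℕ → ℝ => w ∘ σ :=
    measurable_pi_lambda _ fun i => measurable_pi_apply (σ i)
  calc ∫ w, (∑ i ∈ T, w i) ^ h ∂μ = ∫ w, (∑ i ∈ range #T, (w ∘ σ) i) ^ h ∂μ := by
        conv_lhs => rw [← hσT]
        simp only [sum_image fun x _ y _ hxy => σ.injective hxy, Function.comp_apply]
    _ = ∫ w, (∑ i ∈ range #T, w i) ^ h ∂(μ.map fun w => w ∘ σ) := by
        have hF : Measurable fun w : ℕ → ℝ => (∑ i ∈ range #T, w i) ^ h :=
          (measurable_sum _ fun i _ => measurable_pi_apply i).pow_const h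
        exact (integral_map hmeas.aemeasurable hF.aestronglyMeasurable).symm
    _ = weightMoment μ #T h := by rw [hw.2.2 σ hσN, weightMoment]

theorem integral_occupancy (hw : IsWeights N μ) (h j : ℕ) :
    ∫ w, occupancy N w h j ∂μ
      = N.choose j * ∑ m ∈ range (j + 1), j.choose m * ((-1) ^ (j - m) * weightMoment μ m h) := by
  have hsub : ∀ S ∈ (range N).powersetCard j, ∀ T ∈ S.powerset, T ⊆ range N :=
    fun S hS T hT => (mem_powerset.mp hT).trans (mem_powersetCard.mp hS).1
  have hterm : ∀ S ∈ (range N).powersetCard j, ∫ w, ∑ T ∈ S.powerset,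
      (-1 : ℝ) ^ (j - #T) * (∑ i ∈ T, w i) ^ h ∂μ
        = ∑ m ∈ range (j + 1), j.choose m * ((-1) ^ (j - m) * weightMoment μ m h) := by
    intro S hS
    rw [integral_finsetSum _ fun T _ => (hw.integrable_sum_pow T h).const_mul _]
    simp_rw [integral_const_mul]
    rw [sum_congr rfl fun T hT => by rw [hw.integral_sum_pow_eq (hsub S hS T hT)],
      sum_powerset_apply_card (fun m => (-1 : ℝ) ^ (j - m) * weightMoment μ m h),
      (mem_powersetCard.mp hS).2]
    simp only [nsmul_eq_mul]
  unfold occupancy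
  rw [integral_finsetSum _ fun S _ => integrable_finsetSum _ fun T _ =>
      (hw.integrable_sum_pow T h).const_mul _, sum_congr rfl hterm, sum_const,
    card_powersetCard, card_range, nsmul_eq_mul]

theorem sum_integral_occupancy_mul_chooseRatio (hw : IsWeights N μ) {k : ℕ}
    (hk : k ≤ N) (h : ℕ) :
    ∑ j ∈ range (N + 1), (∫ w, occupancy N w h j ∂μ) * chooseRatio N k j = weightMoment μ k h := by
  calc ∑ j ∈ range (N + 1), (∫ w, occupancy N w h j ∂μ) * chooseRatio N k j
      = ∑ j ∈ range (N + 1), ∑ m ∈ range (N + 1),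
          (k.choose j : ℝ) * j.choose m * (-1) ^ (j - m) * weightMoment μ m h := by
        refine sum_congr rfl fun j hj => ?_
        have hjN := mem_range_succ_iff.mp hj
        have hpos : (N.choose j : ℝ) ≠ 0 := by exact_mod_cast (Nat.choose_pos hjN).ne'
        rw [integral_occupancy hw, chooseRatio, mul_comm, ← mul_assoc, div_mul_cancel₀ _ hpos,
          mul_sum]
        refine (sum_congr rfl fun m _ => by ring).trans (sum_subset
          (range_subset_range.mpr (by omega)) fun m _ hm => ?_)
        rw [Nat.choose_eq_zero_of_lt (n := j) (by simpa using hm)]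
        simp
    _ = ∑ m ∈ range (N + 1), (if m = k then 1 else 0) * weightMoment μ m h := by
        rw [sum_comm]
        simp only [← sum_mul, sum_choose_mul_choose_mul_neg_one_pow hk]
    _ = weightMoment μ k h := by simp [hk]

theorem IsWeightVector.abs_occupancy_le {w : ℕ → ℝ} (hw : IsWeightVector N w) (h j : ℕ) :
    |occupancy N w h j| ≤ N.choose j * 2 ^ j := by
  calc |occupancy N w h j| ≤ ∑ S ∈ (range N).powersetCard j, ∑ _T ∈ S.powerset, (1 : ℝ) := by
        refine (abs_sum_le_sum_abs _ _).trans (sum_le_sum fun S _ =>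
          (abs_sum_le_sum_abs _ _).trans (sum_le_sum fun _ _ => ?_))
        rw [abs_mul, abs_pow, abs_neg, abs_one, one_pow, one_mul, abs_pow,
          abs_of_nonneg (hw.sum_nonneg _)]
        exact pow_le_one₀ (hw.sum_nonneg _) (hw.sum_le_one _)
    _ = N.choose j * 2 ^ j := by
        rw [sum_congr rfl fun S hS => by
          rw [sum_const, card_powerset, (mem_powersetCard.mp hS).2, nsmul_one]]
        simp

theorem sum_caspStep_mul_chooseRatio (hw : IsWeights N μ) (hs0 : 0 ≤ s) (hs1 : s < 1)
    {a k : ℕ} (ha : 1 ≤ a) (hk : k ≤ N) :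
    ∑ j ∈ range (N + 1), caspStep N s μ a j * chooseRatio N k j
      = ∑' h, negbinom s a h * weightMoment μ k h := by
  have := hw.1
  have hsummable : ∀ j ∈ range (N + 1), Summable fun h =>
      negbinom s a h * (∫ w, occupancy N w h j ∂μ) * chooseRatio N k j := by
    intro j _
    have hbound : ∀ h, ‖negbinom s a h * ∫ w, occupancy N w h j ∂μ‖
        ≤ negbinom s a h * (N.choose j * 2 ^ j) := by
      intro h
      rw [norm_mul, Real.norm_of_nonneg (negbinom_nonneg hs0 hs1.le a h)]
      refine mul_le_mul_of_nonneg_left ?_ (negbinom_nonneg hs0 hs1.le a h)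
      refine (norm_integral_le_of_norm_le_const ?_).trans_eq (by rw [probReal_univ, mul_one])
      filter_upwards [hw.ae_isWeightVector] with w hwv
      exact hwv.abs_occupancy_le h j
    exact (((summable_negbinom hs0 hs1 ha).mul_right _).of_norm_bounded hbound).mul_right _
  calc ∑ j ∈ range (N + 1), caspStep N s μ a j * chooseRatio N k j
      = ∑ j ∈ range (N + 1), ∑' h,
          negbinom s a h * (∫ w, occupancy N w h j ∂μ) * chooseRatio N k j := by
        simp only [caspStep, tsum_mul_right]
    _ = ∑' h, ∑ j ∈ range (N + 1),
          negbinom s a h * (∫ w, occupancy N w h j ∂μ) * chooseRatio N k j :=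
        (Summable.tsum_finsetSum hsummable).symm
    _ = ∑' h, negbinom s a h * weightMoment μ k h := by
        simp only [mul_assoc, ← mul_sum, sum_integral_occupancy_mul_chooseRatio hw hk]

theorem tsum_negbinom_mul_weightMoment (hw : IsWeights N μ) (hs0 : 0 ≤ s)
    (hs1 : s < 1) {a : ℕ} (ha : 1 ≤ a) (k : ℕ) :
    ∑' h, negbinom s a h * weightMoment μ k h = ∫ w, selProb N s k w ^ a ∂μ := by
  have := hw.1
  have hint : ∀ h, Integrable (fun w => negbinom s a h * (∑ i ∈ range k, w i) ^ h) μ :=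
    fun h => (hw.integrable_sum_pow _ h).const_mul _
  have hsummable : Summable fun h => ∫ w, ‖negbinom s a h * (∑ i ∈ range k, w i) ^ h‖ ∂μ := by
    refine (summable_negbinom hs0 hs1 ha).of_nonneg_of_le
      (fun h => integral_nonneg fun w => norm_nonneg _) fun h => ?_
    refine (integral_mono_ae (hint h).norm (integrable_const (negbinom s a h)) ?_).trans_eq
      (by simp)
    filter_upwards [hw.ae_isWeightVector] with w hwv
    rw [norm_mul, norm_pow, Real.norm_of_nonneg (negbinom_nonneg hs0 hs1.le a h),
      Real.norm_of_nonneg (hwv.sum_nonneg _)]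
    exact mul_le_of_le_one_right (negbinom_nonneg hs0 hs1.le a h)
      (pow_le_one₀ (hwv.sum_nonneg _) (hwv.sum_le_one _))
  simp only [weightMoment, ← integral_const_mul]
  rw [integral_tsum_of_summable_integral_norm hint hsummable]
  refine integral_congr_ae ?_
  filter_upwards [hw.ae_isWeightVector] with w hwv
  have hx0 := hwv.sum_nonneg (range k)
  have hsx : ‖s * ∑ i ∈ range k, w i‖ < 1 := by
    rw [Real.norm_of_nonneg (mul_nonneg hs0 hx0)]
    nlinarith [hwv.sum_le_one (range k)]
  rw [(hasSum_negbinom_mul_pow ha hsx).tsum_eq, hwv.selProb_eq]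

theorem canningsStep_caspStep_sampling_duality (hw : IsWeights N μ) (hs0 : 0 ≤ s)
    (hs1 : s < 1) {k a : ℕ} (hk : k ≤ N) (ha : a ∈ Icc 1 N) :
    ∑ j ∈ range (N + 1), canningsStep N s μ k j * chooseRatio N j a
      = ∑ j ∈ range (N + 1), caspStep N s μ a j * chooseRatio N k j := by
  rw [sum_canningsStep_mul_chooseRatio hw hs1 k (mem_Icc.mp ha).2,
    sum_caspStep_mul_chooseRatio hw hs0 hs1 (mem_Icc.mp ha).1 hk,
    tsum_negbinom_mul_weightMoment hw hs0 hs1 (mem_Icc.mp ha).1]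

end Casp

theorem fixation_probability_eq_expected_casp_equilibrium_general
    (N : ℕ) (hN : 1 ≤ N) (μ : Measure (ℕ → ℝ)) (s : ℝ)
    (hw : IsWeights N μ) (hs0 : 0 < s) (hs1 : s < 1)
    (ν : ℕ → ℝ)
    (hν0 : ∀ j, 0 ≤ ν j) (hνzero : ν 0 = 0)
    (hνsum : ∑ j ∈ Finset.range (N + 1), ν j = 1)
    (hνstat : ∀ j, ν j = ∑ i ∈ Finset.range (N + 1), ν i * caspStep N s μ i j) :
    Tendsto (fun g => canningsProb N s μ g (N - 1) 0) atTop
      (𝓝 (∑ j ∈ Finset.range (N + 1), ν j * ((j : ℝ) / N))) := by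
  have hε : 1 / 2 ^ N ≤ (1 : ℝ) := div_le_one_of_le₀ (one_le_pow₀ one_le_two) (by positivity)
  have hharmonic : ∀ k ≤ N, ∑ j ∈ range (N + 1), canningsStep N s μ k j
      * (∑ a ∈ range (N + 1), ν a * chooseRatio N j a)
        = ∑ a ∈ range (N + 1), ν a * chooseRatio N k a := fun k hk =>
    sum_mul_dual_eq_of_stationary
      (fun a ha => canningsStep_caspStep_sampling_duality hw hs0.le hs1 hk ha) hνzero
      fun j _ => hνstat j
  have hlim := iterKernel.tendsto_of_harmonic (fun i _ => canningsStep_nonneg hw hs1 i)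
    (fun i _ => sum_canningsStep hw hs1 i)
    (fun j hj => ⟨canningsStep_zero_left (Nat.one_le_iff_ne_zero.mp (mem_Ico.mp hj).1),
      canningsStep_self_left hw hs1 (mem_Ico.mp hj).2⟩)
    (sub_nonneg.mpr hε) (by simp) (fun i _ => sum_Ico_canningsStep_le hw hs1 hN i)
    hharmonic (sum_mul_chooseRatio_zero_left hνzero) (sum_mul_chooseRatio_self hνsum)
    (fun j hj => sum_mul_chooseRatio_mem_Icc hν0 hνsum (mem_Ico.mp hj).2.le) (Nat.sub_le N 1)
  rw [canningsProb_eq_iterKernel, ← sub_sub_cancel 1 (∑ j ∈ range (N + 1), ν j * ((j : ℝ) / N)),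
    ← sum_mul_chooseRatio_pred_left hN hνsum]
  exact hlim

/-- **Fixation probability via the stationary CASP** (Corollary 3.3): if `ν` is the
stationary distribution of the Cannings ancestral selection process, then the
fixation probability of a single beneficial mutant,
`π_N = lim_{g→∞} P(K_g = 0 | K_0 = N−1)`, exists and equals `E[A_eq / N]`. -/
theorem fixation_probability_eq_expected_casp_equilibrium
    (N : ℕ) (hN : 1 ≤ N) (μ : Measure (ℕ → ℝ)) (s : ℝ)
    (hw : IsWeights N μ) (hs0 : 0 < s) (hs1 : s < 1)
    (ν : ℕ → ℝ)
    (hν0 : ∀ j, 0 ≤ ν j) (hνzero : ν 0 = 0) (hνsupp : ∀ j, N < j → ν j = 0)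
    (hνsum : ∑ j ∈ Finset.range (N + 1), ν j = 1)
    (hνstat : ∀ j, ν j = ∑ i ∈ Finset.range (N + 1), ν i * caspStep N s μ i j) :
    Tendsto (fun g => canningsProb N s μ g (N - 1) 0) atTop
      (𝓝 (∑ j ∈ Finset.range (N + 1), ν j * ((j : ℝ) / N))) :=
  fixation_probability_eq_expected_casp_equilibrium_general N hN μ s hw hs0 hs1 ν hν0 hνzero hνsum
    hνstat

end
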